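/- arXiv:1006.0518 — 6 statements merged into one kernel-verified Lean document; each statement's English description precedes it below -/
import Mathlib

section
/- For every integer m with 0 ≤ m < pqr, the coefficients of Q_{p,q,r} satisfy a_m = Σ_{m−p < n ≤ m} ( χ(n) − χ(n−q) − χ(n−r) + χ(n−q−r) ), where the sum is over integers n in the interval (m−p, m]. -/
open Polynomial
open scoped Classical

/-- The defining identity of the ternary inclusion-exclusion polynomial `Q_{p,q,r}`:
`Q·(z^{qr}-1)(z^{rp}-1)(z^{pq}-1)(z-1) = (z^{pqr}-1)(z^r-1)(z^q-1)(z^p-1)`. -/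
def ternaryId (p q r : ℕ) (Q : Polynomial ℤ) : Prop :=
  Q * (((X : Polynomial ℤ) ^ (q * r) - 1) * ((X : Polynomial ℤ) ^ (r * p) - 1) *
      ((X : Polynomial ℤ) ^ (p * q) - 1) * ((X : Polynomial ℤ) - 1)) =
    ((X : Polynomial ℤ) ^ (p * q * r) - 1) * ((X : Polynomial ℤ) ^ r - 1) *
      ((X : Polynomial ℤ) ^ q - 1) * ((X : Polynomial ℤ) ^ p - 1)

/-- The coefficient `a_m` of `z^m` in `Q`, indexed by `m : ℤ`, with the convention
that `a_m = 0` for `m < 0` (and automatically `a_m = 0` for `m` beyond the degree). -/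
def aCoeff (Q : Polynomial ℤ) (m : ℤ) : ℤ :=
  if 0 ≤ m then Q.coeff m.toNat else 0

/-- The characteristic function `χ` of integers representable as
`i·qr + j·rp + k·pq` with integers `i, j, k ≥ 0`. -/
noncomputable def chi (p q r : ℕ) (n : ℤ) : ℤ :=
  if ∃ i j k : ℕ, n = (i * (q * r) + j * (r * p) + k * (p * q) : ℕ) then 1 else 0

/- ## Auxiliary material -/

noncomputable def geomP (a n : ℕ) : Polynomial ℤ :=
  ∑ i ∈ Finset.range n, ((X : Polynomial ℤ) ^ a) ^ i

noncomputable def RR (p q r : ℕ) : Polynomial ℤ :=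
  geomP (q * r) p * geomP (r * p) q * geomP (p * q) r

lemma geomP_mul (a n : ℕ) :
    ((X : Polynomial ℤ) ^ a - 1) * geomP a n = (X : Polynomial ℤ) ^ (a * n) - 1 := by
  rw [mul_comm, geomP, geom_sum_mul, ← pow_mul]

lemma RR_key (p q r : ℕ) :
    (((X : Polynomial ℤ) ^ (q * r) - 1) * ((X : Polynomial ℤ) ^ (r * p) - 1) *
      ((X : Polynomial ℤ) ^ (p * q) - 1)) * RR p q r =
    ((X : Polynomial ℤ) ^ (p * q * r) - 1) ^ 3 := by
  have h1 := geomP_mul (q * r) p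
  have h2 := geomP_mul (r * p) q
  have h3 := geomP_mul (p * q) r
  have e1 : q * r * p = p * q * r := by ring
  have e2 : r * p * q = p * q * r := by ring
  rw [RR]
  calc (((X : Polynomial ℤ) ^ (q * r) - 1) * ((X : Polynomial ℤ) ^ (r * p) - 1) *
        ((X : Polynomial ℤ) ^ (p * q) - 1)) *
        (geomP (q * r) p * geomP (r * p) q * geomP (p * q) r)
      = (((X : Polynomial ℤ) ^ (q * r) - 1) * geomP (q * r) p) *
        ((((X : Polynomial ℤ) ^ (r * p) - 1)) * geomP (r * p) q) *
        ((((X : Polynomial ℤ) ^ (p * q) - 1)) * geomP (p * q) r) := by ring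
    _ = ((X : Polynomial ℤ) ^ (p * q * r) - 1) ^ 3 := by
        rw [h1, h2, h3, e1, e2]; ring

lemma Xpow_sub_one_ne (N : ℕ) (hN : 0 < N) : ((X : Polynomial ℤ) ^ N - 1) ≠ 0 := by
  intro h
  have := congrArg (fun P => Polynomial.coeff P N) h
  simp [Polynomial.coeff_X_pow, Polynomial.coeff_one, hN.ne'] at this

/-- The main multiplied-out identity. -/
lemma main_id (p q r : ℕ) (hp : 0 < p) (hq : 0 < q) (hr : 0 < r)
    (Q : Polynomial ℤ) (hQ : ternaryId p q r Q) :
    Q * ((X : Polynomial ℤ) - 1) * ((X : Polynomial ℤ) ^ (p * q * r) - 1) ^ 2 =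
    (((X : Polynomial ℤ) ^ p - 1) * ((X : Polynomial ℤ) ^ q - 1) *
      ((X : Polynomial ℤ) ^ r - 1)) * RR p q r := by
  have hN : 0 < p * q * r := by positivity
  have hne := Xpow_sub_one_ne (p * q * r) hN
  apply mul_left_cancel₀ hne
  have hQ' := hQ
  unfold ternaryId at hQ'
  calc ((X : Polynomial ℤ) ^ (p * q * r) - 1) *
        (Q * ((X : Polynomial ℤ) - 1) * ((X : Polynomial ℤ) ^ (p * q * r) - 1) ^ 2)
      = Q * ((X : Polynomial ℤ) - 1) * ((X : Polynomial ℤ) ^ (p * q * r) - 1) ^ 3 := by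
        ring
    _ = Q * ((X : Polynomial ℤ) - 1) *
        ((((X : Polynomial ℤ) ^ (q * r) - 1) * ((X : Polynomial ℤ) ^ (r * p) - 1) *
          ((X : Polynomial ℤ) ^ (p * q) - 1)) * RR p q r) := by rw [RR_key]
    _ = (Q * (((X : Polynomial ℤ) ^ (q * r) - 1) * ((X : Polynomial ℤ) ^ (r * p) - 1) *
          ((X : Polynomial ℤ) ^ (p * q) - 1) * ((X : Polynomial ℤ) - 1))) * RR p q r := by
        ring
    _ = (((X : Polynomial ℤ) ^ (p * q * r) - 1) * ((X : Polynomial ℤ) ^ r - 1) *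
          ((X : Polynomial ℤ) ^ q - 1) * ((X : Polynomial ℤ) ^ p - 1)) * RR p q r := by
        rw [hQ']
    _ = ((X : Polynomial ℤ) ^ (p * q * r) - 1) *
        ((((X : Polynomial ℤ) ^ p - 1) * ((X : Polynomial ℤ) ^ q - 1) *
          ((X : Polynomial ℤ) ^ r - 1)) * RR p q r) := by ring

/- ## aCoeff computation rules -/

lemma aCoeff_add (P P' : Polynomial ℤ) (m : ℤ) :
    aCoeff (P + P') m = aCoeff P m + aCoeff P' m := by
  unfold aCoeff; split <;> simp

lemma aCoeff_sub (P P' : Polynomial ℤ) (m : ℤ) :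
    aCoeff (P - P') m = aCoeff P m - aCoeff P' m := by
  unfold aCoeff; split <;> simp

lemma aCoeff_mul_X_pow (P : Polynomial ℤ) (k : ℕ) (m : ℤ) :
    aCoeff (P * (X : Polynomial ℤ) ^ k) m = aCoeff P (m - k) := by
  unfold aCoeff
  by_cases h0 : 0 ≤ m
  · rw [if_pos h0, Polynomial.coeff_mul_X_pow']
    by_cases hk : 0 ≤ m - (k : ℤ)
    · rw [if_pos hk, if_pos (by omega : k ≤ m.toNat)]
      congr 1
      omega
    · rw [if_neg hk, if_neg (by omega : ¬ k ≤ m.toNat)]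
  · rw [if_neg h0, if_neg (by omega : ¬ 0 ≤ m - (k : ℤ))]

lemma aCoeff_mul_X (P : Polynomial ℤ) (m : ℤ) :
    aCoeff (P * (X : Polynomial ℤ)) m = aCoeff P (m - 1) := by
  have := aCoeff_mul_X_pow P 1 m
  simpa using this

lemma aCoeff_neg_eq_zero (P : Polynomial ℤ) (m : ℤ) (h : m < 0) : aCoeff P m = 0 := by
  unfold aCoeff; rw [if_neg (by omega)]


lemma modlt_eq (n a b : ℕ) (ha : a < n) (hb : b < n) (h : a ≡ b [MOD n]) : a = b := by
  rwa [Nat.ModEq, Nat.mod_eq_of_lt ha, Nat.mod_eq_of_lt hb] at h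

lemma cast_cancel (n a b c : ℕ) (hc : Nat.Coprime c n)
    (hz : (a : ZMod n) * (c : ZMod n) = (b : ZMod n) * (c : ZMod n))
    (ha : a < n) (hb : b < n) : a = b := by
  have hu := (ZMod.isUnit_iff_coprime c n).mpr hc
  have h1 : (a : ZMod n) = (b : ZMod n) := hu.mul_right_cancel hz
  exact modlt_eq n a b ha hb ((ZMod.natCast_eq_natCast_iff a b n).mp h1)

lemma rep_unique (p q r : ℕ) (hp : 0 < p) (hq : 0 < q) (hr : 0 < r)
    (hpq : Nat.Coprime p q) (hqr : Nat.Coprime q r) (hrp : Nat.Coprime r p)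
    (i j k i' j' k' : ℕ) (hi : i < p) (hj : j < q) (hk : k < r)
    (hi' : i' < p) (hj' : j' < q) (hk' : k' < r)
    (h : i * (q * r) + j * (r * p) + k * (p * q) = i' * (q * r) + j' * (r * p) + k' * (p * q)) :
    i = i' ∧ j = j' ∧ k = k' := by
  have hii : i = i' := by
    apply cast_cancel p i i' (q * r) (Nat.Coprime.mul hpq.symm hrp) _ hi hi'
    have hc := congrArg (fun n : ℕ => (n : ZMod p)) h
    have hp0 : ((p : ZMod p)) = 0 := ZMod.natCast_self p
    push_cast at hc ⊢
    linear_combination hc - ((j:ZMod p) * (r:ZMod p) - (j':ZMod p)*(r:ZMod p)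
      + (k:ZMod p)*(q:ZMod p) - (k':ZMod p)*(q:ZMod p)) * hp0
  subst hii
  rw [add_assoc, add_assoc] at h
  have h2 := Nat.add_left_cancel h
  have hjj : j = j' := by
    apply cast_cancel q j j' (r * p) (Nat.Coprime.mul hqr.symm hpq) _ hj hj'
    have hc := congrArg (fun n : ℕ => (n : ZMod q)) h2
    have hq0 : ((q : ZMod q)) = 0 := ZMod.natCast_self q
    push_cast at hc ⊢
    linear_combination hc - ((k:ZMod q) * (p:ZMod q) - (k':ZMod q)*(p:ZMod q)) * hq0
  subst hjj
  have h3 := Nat.add_left_cancel h2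
  exact ⟨rfl, rfl, Nat.eq_of_mul_eq_mul_right (by positivity) h3⟩

lemma RR_sum (p q r : ℕ) : RR p q r =
    ∑ i ∈ Finset.range p, ∑ j ∈ Finset.range q, ∑ k ∈ Finset.range r,
      (X : Polynomial ℤ) ^ (i * (q * r) + j * (r * p) + k * (p * q)) := by
  unfold RR geomP
  rw [Finset.sum_mul_sum, Finset.sum_mul]
  refine Finset.sum_congr rfl fun i _ => ?_
  rw [Finset.sum_mul]
  refine Finset.sum_congr rfl fun j _ => ?_
  rw [Finset.mul_sum]
  refine Finset.sum_congr rfl fun k _ => ?_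
  rw [← pow_mul, ← pow_mul, ← pow_mul, ← pow_add, ← pow_add]
  congr 1
  ring

lemma RR_coeff (p q r : ℕ) (hp : 0 < p) (hq : 0 < q) (hr : 0 < r)
    (hpq : Nat.Coprime p q) (hqr : Nat.Coprime q r) (hrp : Nat.Coprime r p)
    (n : ℕ) (hn : n < p * q * r) :
    (RR p q r).coeff n =
      if ∃ i j k : ℕ, n = i * (q * r) + j * (r * p) + k * (p * q) then 1 else 0 := by
  rw [RR_sum]
  simp only [Polynomial.finset_sum_coeff, Polynomial.coeff_X_pow]
  by_cases hex : ∃ i j k : ℕ, n = i * (q * r) + j * (r * p) + k * (p * q)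
  · rw [if_pos hex]
    obtain ⟨i, j, k, hrep⟩ := hex
    have hqr0 : 0 < q * r := by positivity
    have hrp0 : 0 < r * p := by positivity
    have hpq0 : 0 < p * q := by positivity
    have hip : i < p := by
      have h1 : i * (q * r) < p * (q * r) := by
        calc i * (q * r) ≤ n := by omega
        _ < p * q * r := hn
        _ = p * (q * r) := by ring
      exact Nat.lt_of_mul_lt_mul_right h1
    have hjq : j < q := by
      have h1 : j * (r * p) < q * (r * p) := by
        calc j * (r * p) ≤ n := by omega
        _ < p * q * r := hn
        _ = q * (r * p) := by ring
      exact Nat.lt_of_mul_lt_mul_right h1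
    have hkr : k < r := by
      have h1 : k * (p * q) < r * (p * q) := by
        calc k * (p * q) ≤ n := by omega
        _ < p * q * r := hn
        _ = r * (p * q) := by ring
      exact Nat.lt_of_mul_lt_mul_right h1
    rw [Finset.sum_eq_single_of_mem i (Finset.mem_range.mpr hip)]
    · rw [Finset.sum_eq_single_of_mem j (Finset.mem_range.mpr hjq)]
      · rw [Finset.sum_eq_single_of_mem k (Finset.mem_range.mpr hkr)]
        · rw [if_pos hrep]
        · intro b hb hbk
          rw [if_neg]
          intro hcon
          exact hbk ((rep_unique p q r hp hq hr hpq hqr hrp i j b i j k hip hjq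
            (Finset.mem_range.mp hb) hip hjq hkr (hcon.symm.trans hrep)).2.2)
      · intro b hb hbj
        apply Finset.sum_eq_zero
        intro c hc
        rw [if_neg]
        intro hcon
        exact hbj ((rep_unique p q r hp hq hr hpq hqr hrp i b c i j k hip
          (Finset.mem_range.mp hb) (Finset.mem_range.mp hc) hip hjq hkr (hcon.symm.trans hrep)).2.1)
    · intro b hb hbi
      apply Finset.sum_eq_zero
      intro c hc
      apply Finset.sum_eq_zero
      intro d hd
      rw [if_neg]
      intro hcon
      exact hbi ((rep_unique p q r hp hq hr hpq hqr hrp b c d i j k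
        (Finset.mem_range.mp hb) (Finset.mem_range.mp hc) (Finset.mem_range.mp hd)
        hip hjq hkr (hcon.symm.trans hrep)).1)
  · rw [if_neg hex]
    apply Finset.sum_eq_zero; intro i hi
    apply Finset.sum_eq_zero; intro j hj
    apply Finset.sum_eq_zero; intro k hk
    rw [if_neg]
    intro hcon
    exact hex ⟨i, j, k, hcon⟩

lemma aCoeff_RR (p q r : ℕ) (hp : 0 < p) (hq : 0 < q) (hr : 0 < r)
    (hpq : Nat.Coprime p q) (hqr : Nat.Coprime q r) (hrp : Nat.Coprime r p)
    (n : ℤ) (hn : n < ((p * q * r : ℕ) : ℤ)) :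
    aCoeff (RR p q r) n = chi p q r n := by
  unfold aCoeff chi
  by_cases h0 : 0 ≤ n
  · rw [if_pos h0, RR_coeff p q r hp hq hr hpq hqr hrp n.toNat (by omega)]
    congr 1
    apply propext
    constructor
    · rintro ⟨i, j, k, hrep⟩; exact ⟨i, j, k, by omega⟩
    · rintro ⟨i, j, k, hrep⟩; exact ⟨i, j, k, by omega⟩
  · rw [if_neg h0, if_neg]
    rintro ⟨i, j, k, hrep⟩
    omega


noncomputable def gfun (p q r : ℕ) (n : ℤ) : ℤ :=
  chi p q r n - chi p q r (n - q) - chi p q r (n - r) + chi p q r (n - q - r)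

lemma step (p q r : ℕ) (hp : 0 < p) (hq : 0 < q) (hr : 0 < r)
    (hpq : Nat.Coprime p q) (hqr : Nat.Coprime q r) (hrp : Nat.Coprime r p)
    (Q : Polynomial ℤ) (hQ : ternaryId p q r Q)
    (m : ℤ) (hm : m < ((p * q * r : ℕ) : ℤ)) :
    aCoeff Q m - aCoeff Q (m - 1) = gfun p q r m - gfun p q r (m - p) := by
  have hID := main_id p q r hp hq hr Q hQ
  have e1 : Q * ((X : Polynomial ℤ) - 1) * ((X : Polynomial ℤ) ^ (p * q * r) - 1) ^ 2 =
      (((Q * X - Q) * X ^ (p * q * r)) * X ^ (p * q * r) - (Q * X - Q) * X ^ (p * q * r))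
        - (Q * X - Q) * X ^ (p * q * r) + (Q * X - Q) := by ring
  have e2 : (((X : Polynomial ℤ) ^ p - 1) * ((X : Polynomial ℤ) ^ q - 1) *
      ((X : Polynomial ℤ) ^ r - 1)) * RR p q r =
      ((((RR p q r * X ^ p) * X ^ q) * X ^ r - (RR p q r * X ^ q) * X ^ r)
        - (RR p q r * X ^ p) * X ^ r - (RR p q r * X ^ p) * X ^ q)
        + (RR p q r * X ^ p + RR p q r * X ^ q + RR p q r * X ^ r) - RR p q r := by ring
  rw [e1, e2] at hID
  have hc := congrArg (fun P => aCoeff P m) hID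
  simp only [aCoeff_sub, aCoeff_add, aCoeff_mul_X_pow, aCoeff_mul_X] at hc
  have hN : (0:ℤ) < ((p * q * r : ℕ) : ℤ) := by positivity
  have v1 : aCoeff Q (m - ↑(p*q*r) - ↑(p*q*r) - 1) = 0 := aCoeff_neg_eq_zero _ _ (by omega)
  have v2 : aCoeff Q (m - ↑(p*q*r) - ↑(p*q*r)) = 0 := aCoeff_neg_eq_zero _ _ (by omega)
  have v3 : aCoeff Q (m - ↑(p*q*r) - 1) = 0 := aCoeff_neg_eq_zero _ _ (by omega)
  have v4 : aCoeff Q (m - ↑(p*q*r)) = 0 := aCoeff_neg_eq_zero _ _ (by omega)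
  have c1 := aCoeff_RR p q r hp hq hr hpq hqr hrp (m - ↑r - ↑q - ↑p) (by omega)
  have c2 := aCoeff_RR p q r hp hq hr hpq hqr hrp (m - ↑r - ↑q) (by omega)
  have c3 := aCoeff_RR p q r hp hq hr hpq hqr hrp (m - ↑r - ↑p) (by omega)
  have c4 := aCoeff_RR p q r hp hq hr hpq hqr hrp (m - ↑q - ↑p) (by omega)
  have c5 := aCoeff_RR p q r hp hq hr hpq hqr hrp (m - ↑p) (by omega)
  have c6 := aCoeff_RR p q r hp hq hr hpq hqr hrp (m - ↑q) (by omega)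
  have c7 := aCoeff_RR p q r hp hq hr hpq hqr hrp (m - ↑r) (by omega)
  have c8 := aCoeff_RR p q r hp hq hr hpq hqr hrp m (by omega)
  rw [v1, v2, v3, v4, c1, c2, c3, c4, c5, c6, c7, c8] at hc
  unfold gfun
  have a1 : m - ↑r - ↑q - ↑p = m - ↑p - ↑q - ↑r := by ring
  have a2 : m - ↑r - ↑q = m - ↑q - ↑r := by ring
  have a3 : m - ↑r - ↑p = m - ↑p - ↑r := by ring
  have a4 : m - ↑q - ↑p = m - ↑p - ↑q := by ring
  rw [a1, a2, a3, a4] at hc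
  linarith [hc]

lemma chi_neg (p q r : ℕ) (n : ℤ) (h : n < 0) : chi p q r n = 0 := by
  unfold chi
  rw [if_neg]
  rintro ⟨i, j, k, hn⟩
  omega

lemma gfun_neg (p q r : ℕ) (n : ℤ) (h : n < 0) : gfun p q r n = 0 := by
  unfold gfun
  rw [chi_neg p q r n h, chi_neg p q r _ (by omega), chi_neg p q r _ (by omega),
    chi_neg p q r _ (by omega)]
  ring

lemma sum_neg (p q r : ℕ) (m : ℤ) (h : m < 0) :
    ∑ n ∈ Finset.Ioc (m - (p : ℤ)) m, gfun p q r n = 0 := by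
  apply Finset.sum_eq_zero
  intro n hn
  rw [Finset.mem_Ioc] at hn
  exact gfun_neg p q r n (by omega)

lemma slide (p q r : ℕ) (hp : 0 < p) (m : ℤ) :
    ∑ n ∈ Finset.Ioc (m - (p : ℤ)) m, gfun p q r n =
    (∑ n ∈ Finset.Ioc (m - 1 - (p : ℤ)) (m - 1), gfun p q r n)
      + gfun p q r m - gfun p q r (m - p) := by
  have hp1 : (1:ℤ) ≤ (p:ℤ) := by exact_mod_cast hp
  have h1 : Finset.Ioc (m - (p:ℤ)) (m - 1) ∪ Finset.Ioc (m - 1) m = Finset.Ioc (m - (p:ℤ)) m := by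
    apply Finset.Ioc_union_Ioc_eq_Ioc <;> omega
  have h2 : Finset.Ioc (m - 1 - (p:ℤ)) (m - (p:ℤ)) ∪ Finset.Ioc (m - (p:ℤ)) (m - 1)
      = Finset.Ioc (m - 1 - (p:ℤ)) (m - 1) := by
    apply Finset.Ioc_union_Ioc_eq_Ioc <;> omega
  have hsing : ∀ a : ℤ, Finset.Ioc (a - 1) a = {a} := by
    intro a
    ext x
    simp only [Finset.mem_Ioc, Finset.mem_singleton]
    omega
  have hsing2 : Finset.Ioc (m - 1 - (p:ℤ)) (m - (p:ℤ)) = {m - (p:ℤ)} := by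
    have := hsing (m - (p:ℤ))
    rw [← this]
    congr 1
    ring
  have hd1 : Disjoint (Finset.Ioc (m - (p:ℤ)) (m - 1)) (Finset.Ioc (m - 1) m) := by
    rw [Finset.disjoint_left]
    intro x hx hx'
    simp only [Finset.mem_Ioc] at hx hx'
    omega
  have hd2 : Disjoint (Finset.Ioc (m - 1 - (p:ℤ)) (m - (p:ℤ))) (Finset.Ioc (m - (p:ℤ)) (m - 1)) := by
    rw [Finset.disjoint_left]
    intro x hx hx'
    simp only [Finset.mem_Ioc] at hx hx'
    omega
  rw [← h1, Finset.sum_union hd1, ← h2, Finset.sum_union hd2, hsing2, hsing m]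
  simp only [Finset.sum_singleton]
  ring

lemma tele (p q r : ℕ) (hp : 0 < p) (hq : 0 < q) (hr : 0 < r)
    (hpq : Nat.Coprime p q) (hqr : Nat.Coprime q r) (hrp : Nat.Coprime r p)
    (Q : Polynomial ℤ) (hQ : ternaryId p q r Q) :
    ∀ N : ℕ, ∀ m : ℤ, m.toNat = N → 0 ≤ m → m < ((p * q * r : ℕ) : ℤ) →
      aCoeff Q m = ∑ n ∈ Finset.Ioc (m - (p : ℤ)) m, gfun p q r n := by
  intro N
  induction N with
  | zero =>
    intro m hmN hm0 hm
    have hm0' : m = 0 := by omega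
    subst hm0'
    have hs := step p q r hp hq hr hpq hqr hrp Q hQ 0 hm
    rw [slide p q r hp 0]
    rw [sum_neg p q r (0 - 1) (by omega)]
    rw [aCoeff_neg_eq_zero Q (0 - 1) (by omega)] at hs
    linarith [hs]
  | succ N ih =>
    intro m hmN hm0 hm
    have hm1 : 0 ≤ m - 1 := by omega
    have hs := step p q r hp hq hr hpq hqr hrp Q hQ m hm
    have ihm := ih (m - 1) (by omega) hm1 (by omega)
    rw [slide p q r hp m, ← ihm]
    linarith [hs]

/-- For `0 ≤ m < pqr`:
`a_m = Σ_{m-p < n ≤ m} (χ(n) - χ(n-q) - χ(n-r) + χ(n-q-r))`. -/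
theorem stmt_10 (p q r : ℕ) (hp : 3 ≤ p) (hq : 3 ≤ q) (hr : 3 ≤ r)
    (hpq : Nat.Coprime p q) (hqr : Nat.Coprime q r) (hrp : Nat.Coprime r p)
    (Q : Polynomial ℤ) (hQ : ternaryId p q r Q)
    (m : ℤ) (hm0 : 0 ≤ m) (hm : m < ((p * q * r : ℕ) : ℤ)) :
    aCoeff Q m = ∑ n ∈ Finset.Ioc (m - (p : ℤ)) m,
      (chi p q r n - chi p q r (n - q) - chi p q r (n - r) + chi p q r (n - q - r)) := by
  have h3p : 0 < p := by omega
  have h3q : 0 < q := by omega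
  have h3r : 0 < r := by omega
  have h := tele p q r h3p h3q h3r hpq hqr hrp Q hQ m.toNat m rfl hm0 hm
  simpa [gfun] using h
end

section
/- For every integer n with 0 ≤ n < pqr, the following are equivalent: (i) χ(n) = 1; (ii) δ_n = 0; (iii) f(n) ≤ ⌊n/r⌋. -/
open Polynomial
open scoped Classical

/-- `rep3 p q r n x y z δ` says that `n = x·qr + y·rp + z·pq + δ·pqr` with
`0 ≤ x < p`, `0 ≤ y < q`, `0 ≤ z < r` (this representation exists and is unique). -/
def rep3 (p q r : ℕ) (n x y z δ : ℤ) : Prop :=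
  0 ≤ x ∧ x < p ∧ 0 ≤ y ∧ y < q ∧ 0 ≤ z ∧ z < r ∧
    n = x * ((q : ℤ) * r) + y * ((r : ℤ) * p) + z * ((p : ℤ) * q) + δ * ((p : ℤ) * q * r)

private lemma aux_nonneg (p : ℕ) (x : ℤ) (hppos : 0 < (p:ℤ)) (hx0 : 0 ≤ x) (hxp : x < p)
    (i : ℕ) (hd : (p:ℤ) ∣ ((i:ℤ) - x)) : 0 ≤ (i:ℤ) - x := by
  by_contra h
  push_neg at h
  have h2 : (p:ℤ) ∣ x - (i:ℤ) := by
    rw [show x - (i:ℤ) = -((i:ℤ) - x) by ring]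
    exact dvd_neg.mpr hd
  have h3 := Int.le_of_dvd (by linarith) h2
  have h4 : (0:ℤ) ≤ (i:ℤ) := Int.natCast_nonneg i
  linarith

/-- For `0 ≤ n < pqr` with representation `n = x·qr + y·rp + z·pq + δ·pqr`, the
following are equivalent: (i) `χ(n) = 1`; (ii) `δ = 0`; (iii) `xq + yp ≤ ⌊n/r⌋`. -/
theorem stmt_11 (p q r : ℕ) (hp : 3 ≤ p) (hq : 3 ≤ q) (hr : 3 ≤ r)
    (hpq : Nat.Coprime p q) (hqr : Nat.Coprime q r) (hrp : Nat.Coprime r p)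
    (n : ℤ) (hn0 : 0 ≤ n) (hn : n < ((p * q * r : ℕ) : ℤ))
    (x y z δ : ℤ) (hrep : rep3 p q r n x y z δ) :
    (chi p q r n = 1 ↔ δ = 0) ∧
    (chi p q r n = 1 ↔ x * q + y * p ≤ n / (r : ℤ)) := by
  obtain ⟨hx0, hxp, hy0, hyq, hz0, hzr, heq⟩ := hrep
  have hp3 : (3:ℤ) ≤ p := by exact_mod_cast hp
  have hq3 : (3:ℤ) ≤ q := by exact_mod_cast hq
  have hr3 : (3:ℤ) ≤ r := by exact_mod_cast hr
  have hppos : (0:ℤ) < p := by linarith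
  have hqpos : (0:ℤ) < q := by linarith
  have hrpos : (0:ℤ) < r := by linarith
  have hM : (0:ℤ) < (p:ℤ) * q * r := by positivity
  have hn' : n < (p:ℤ) * q * r := by push_cast at hn; linarith
  have hδle : δ ≤ 0 := by
    have h1 : δ * ((p:ℤ) * q * r) < 1 * ((p:ℤ) * q * r) := by
      have t1 := mul_nonneg hx0 (by positivity : (0:ℤ) ≤ (q:ℤ) * r)
      have t2 := mul_nonneg hy0 (by positivity : (0:ℤ) ≤ (r:ℤ) * p)
      have t3 := mul_nonneg hz0 (by positivity : (0:ℤ) ≤ (p:ℤ) * q)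
      linarith
    have h2 := lt_of_mul_lt_mul_right h1 (le_of_lt hM)
    linarith
  have hchi : chi p q r n = 1 ↔
      (∃ i j k : ℕ, n = ((i * (q * r) + j * (r * p) + k * (p * q) : ℕ) : ℤ)) := by
    unfold chi
    split_ifs with h
    · exact iff_of_true rfl h
    · exact iff_of_false (by norm_num) h
  have key : chi p q r n = 1 ↔ δ = 0 := by
    rw [hchi]
    constructor
    · rintro ⟨i, j, k, hijk⟩
      push_cast at hijk
      have copP : IsCoprime (p:ℤ) ((q:ℤ) * r) := by
        rw [← Nat.cast_mul]
        exact Nat.isCoprime_iff_coprime.mpr (hpq.mul_right hrp.symm)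
      have copQ : IsCoprime (q:ℤ) ((r:ℤ) * p) := by
        rw [← Nat.cast_mul]
        exact Nat.isCoprime_iff_coprime.mpr (hqr.mul_right hpq.symm)
      have copR : IsCoprime (r:ℤ) ((p:ℤ) * q) := by
        rw [← Nat.cast_mul]
        exact Nat.isCoprime_iff_coprime.mpr (hrp.mul_right hqr.symm)
      have d1 : (p:ℤ) ∣ ((i:ℤ) - x) :=
        copP.dvd_of_dvd_mul_right
          ⟨(y - (j:ℤ)) * r + (z - (k:ℤ)) * q + δ * ((q:ℤ) * r), by
            linear_combination heq - hijk⟩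
      have d2 : (q:ℤ) ∣ ((j:ℤ) - y) :=
        copQ.dvd_of_dvd_mul_right
          ⟨(x - (i:ℤ)) * r + (z - (k:ℤ)) * p + δ * ((p:ℤ) * r), by
            linear_combination heq - hijk⟩
      have d3 : (r:ℤ) ∣ ((k:ℤ) - z) :=
        copR.dvd_of_dvd_mul_right
          ⟨(x - (i:ℤ)) * q + (y - (j:ℤ)) * p + δ * ((p:ℤ) * q), by
            linear_combination heq - hijk⟩
      have n1 := aux_nonneg p x hppos hx0 hxp i d1
      have n2 := aux_nonneg q y hqpos hy0 hyq j d2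
      have n3 := aux_nonneg r z hrpos hz0 hzr k d3
      have heqδ : δ * ((p:ℤ) * q * r) =
          ((i:ℤ) - x) * ((q:ℤ) * r) + ((j:ℤ) - y) * ((r:ℤ) * p) +
            ((k:ℤ) - z) * ((p:ℤ) * q) := by
        linear_combination hijk - heq
      have hsum : 0 ≤ ((i:ℤ) - x) * ((q:ℤ) * r) + ((j:ℤ) - y) * ((r:ℤ) * p) +
          ((k:ℤ) - z) * ((p:ℤ) * q) := by
        have := mul_nonneg n1 (by positivity : (0:ℤ) ≤ (q:ℤ) * r)
        have := mul_nonneg n2 (by positivity : (0:ℤ) ≤ (r:ℤ) * p)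
        have := mul_nonneg n3 (by positivity : (0:ℤ) ≤ (p:ℤ) * q)
        linarith
      have hδM : 0 ≤ δ * ((p:ℤ) * q * r) := by rw [heqδ]; exact hsum
      have hδnn : 0 ≤ δ := by
        by_contra hc
        push_neg at hc
        have := mul_le_mul_of_nonneg_right (by linarith : δ ≤ -1) hM.le
        linarith
      linarith
    · intro hδ
      refine ⟨x.toNat, y.toNat, z.toNat, ?_⟩
      push_cast
      rw [Int.toNat_of_nonneg hx0, Int.toNat_of_nonneg hy0, Int.toNat_of_nonneg hz0]
      linear_combination heq + ((p:ℤ) * q * r) * hδ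
  refine ⟨key, key.trans ?_⟩
  have hediv : n / (r:ℤ) = x * q + y * p + δ * ((p:ℤ) * q) + z * ((p:ℤ) * q) / r := by
    rw [show n = z * ((p:ℤ) * q) + (x * q + y * p + δ * ((p:ℤ) * q)) * r by
      linear_combination heq]
    rw [Int.add_mul_ediv_right _ _ (by positivity : (r:ℤ) ≠ 0)]
    ring
  constructor
  · intro h
    rw [hediv, h]
    have : 0 ≤ z * ((p:ℤ) * q) / r := Int.ediv_nonneg (by positivity) (le_of_lt hrpos)
    linarith
  · intro h
    by_contra hne
    have hδ1 : δ ≤ -1 := by omega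
    have ht : z * ((p:ℤ) * q) / r < (p:ℤ) * q := by
      rw [Int.ediv_lt_iff_lt_mul hrpos]
      have := mul_lt_mul_of_pos_right hzr (mul_pos hppos hqpos)
      linarith
    rw [hediv] at h
    have := mul_le_mul_of_nonneg_right hδ1 (mul_pos hppos hqpos).le
    linarith
end

section
/- For every integer n with 0 ≤ n < pqr: if it is not the case that δ_n = 0 and z_n = 0, then χ(n) = χ(n − pq); and if δ_n = 0 and z_n = 0, then χ(n) = 1 and χ(n − pq) = 0. The analogous statements hold with pq, z_n replaced by qr, x_n, and with pq, z_n replaced by rp, y_n. -/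
open Polynomial
open scoped Classical

lemma chi_perm (p q r : ℕ) (n : ℤ) : chi p q r n = chi q r p n := by
  unfold chi
  congr 1
  apply propext
  constructor
  · rintro ⟨i, j, k, h⟩
    exact ⟨j, k, i, by push_cast at h ⊢; linarith⟩
  · rintro ⟨i, j, k, h⟩
    exact ⟨k, i, j, by push_cast at h ⊢; linarith⟩

lemma chi_eq (p q r : ℕ) (hp : 0 < p) (hq : 0 < q) (hr : 0 < r)
    (hpq : Nat.Coprime p q) (hqr : Nat.Coprime q r) (hrp : Nat.Coprime r p)
    (n x y z δ : ℤ) (h : rep3 p q r n x y z δ) :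
    chi p q r n = if 0 ≤ δ then 1 else 0 := by
  obtain ⟨hx0, hxp, hy0, hyq, hz0, hzr, heq⟩ := h
  have hp' : (0:ℤ) < p := by exact_mod_cast hp
  have hq' : (0:ℤ) < q := by exact_mod_cast hq
  have hr' : (0:ℤ) < r := by exact_mod_cast hr
  unfold chi
  by_cases hδ : 0 ≤ δ
  · rw [if_pos hδ, if_pos]
    refine ⟨x.toNat + δ.toNat * p, y.toNat, z.toNat, ?_⟩
    push_cast
    rw [Int.toNat_of_nonneg hx0, Int.toNat_of_nonneg hy0, Int.toNat_of_nonneg hz0,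
      Int.toNat_of_nonneg hδ]
    linear_combination heq
  · rw [if_neg hδ, if_neg]
    rintro ⟨i, j, k, hn⟩
    push_cast at hn
    apply hδ
    have hcp : IsCoprime (p : ℤ) ((q : ℤ) * r) := by
      rw [← Nat.cast_mul, Nat.isCoprime_iff_coprime]
      exact Nat.Coprime.mul_right hpq hrp.symm
    have hcq : IsCoprime (q : ℤ) ((r : ℤ) * p) := by
      rw [← Nat.cast_mul, Nat.isCoprime_iff_coprime]
      exact Nat.Coprime.mul_right hqr hpq.symm
    have hcr : IsCoprime (r : ℤ) ((p : ℤ) * q) := by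
      rw [← Nat.cast_mul, Nat.isCoprime_iff_coprime]
      exact Nat.Coprime.mul_right hrp hqr.symm
    have hdp : (p : ℤ) ∣ ((i : ℤ) - x) * ((q : ℤ) * r) :=
      ⟨((y : ℤ) - j) * r + ((z : ℤ) - k) * q + δ * ((q:ℤ) * r), by linear_combination heq - hn⟩
    have hdq : (q : ℤ) ∣ ((j : ℤ) - y) * ((r : ℤ) * p) :=
      ⟨((x : ℤ) - i) * r + ((z : ℤ) - k) * p + δ * ((p:ℤ) * r), by linear_combination heq - hn⟩
    have hdr : (r : ℤ) ∣ ((k : ℤ) - z) * ((p : ℤ) * q) :=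
      ⟨((x : ℤ) - i) * q + ((y : ℤ) - j) * p + δ * ((p:ℤ) * q), by linear_combination heq - hn⟩
    obtain ⟨a, ha⟩ := hcp.dvd_of_dvd_mul_right hdp
    obtain ⟨b, hb⟩ := hcq.dvd_of_dvd_mul_right hdq
    obtain ⟨c, hc⟩ := hcr.dvd_of_dvd_mul_right hdr
    have hi : (0:ℤ) ≤ i := Int.ofNat_nonneg i
    have hj : (0:ℤ) ≤ j := Int.ofNat_nonneg j
    have hk : (0:ℤ) ≤ k := Int.ofNat_nonneg k
    have ha0 : 0 ≤ a := by
      by_contra hcon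
      push_neg at hcon
      have h1 : a ≤ -1 := by omega
      have h2 : (p:ℤ) * a ≤ (p:ℤ) * (-1) := mul_le_mul_of_nonneg_left h1 (le_of_lt hp')
      linarith
    have hb0 : 0 ≤ b := by
      by_contra hcon
      push_neg at hcon
      have h1 : b ≤ -1 := by omega
      have h2 : (q:ℤ) * b ≤ (q:ℤ) * (-1) := mul_le_mul_of_nonneg_left h1 (le_of_lt hq')
      linarith
    have hc0 : 0 ≤ c := by
      by_contra hcon
      push_neg at hcon
      have h1 : c ≤ -1 := by omega
      have h2 : (r:ℤ) * c ≤ (r:ℤ) * (-1) := mul_le_mul_of_nonneg_left h1 (le_of_lt hr')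
      linarith
    have habc : (a + b + c) * ((p:ℤ) * q * r) = δ * ((p:ℤ) * q * r) := by
      linear_combination (-(q:ℤ) * r) * ha + (-(r:ℤ) * p) * hb + (-(p:ℤ) * q) * hc + heq - hn
    have : a + b + c = δ :=
      mul_right_cancel₀ (by positivity) habc
    omega

lemma part_pq (p q r : ℕ) (hp : 0 < p) (hq : 0 < q) (hr : 0 < r)
    (hpq : Nat.Coprime p q) (hqr : Nat.Coprime q r) (hrp : Nat.Coprime r p)
    (n x y z δ : ℤ) (hrep : rep3 p q r n x y z δ) (hδ : δ ≤ 0) :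
    (¬(δ = 0 ∧ z = 0) → chi p q r n = chi p q r (n - (p : ℤ) * q)) ∧
    ((δ = 0 ∧ z = 0) → chi p q r n = 1 ∧ chi p q r (n - (p : ℤ) * q) = 0) := by
  obtain ⟨hx0, hxp, hy0, hyq, hz0, hzr, heq⟩ := hrep
  have h1 := chi_eq p q r hp hq hr hpq hqr hrp n x y z δ ⟨hx0, hxp, hy0, hyq, hz0, hzr, heq⟩
  by_cases hz : z = 0
  · have h2 := chi_eq p q r hp hq hr hpq hqr hrp (n - (p:ℤ)*q) x y ((r:ℤ)-1) (δ-1)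
      ⟨hx0, hxp, hy0, hyq, by exact_mod_cast Int.le_sub_one_of_lt (by exact_mod_cast hr : (0:ℤ) < r),
        by linarith, by subst hz; linear_combination heq⟩
    constructor
    · rintro hnot
      have hδ0 : δ ≠ 0 := fun h => hnot ⟨h, hz⟩
      rw [h1, h2, if_neg (by omega), if_neg (by omega)]
    · rintro ⟨hd0, -⟩
      rw [h1, h2, if_pos (by omega), if_neg (by omega)]
      exact ⟨rfl, rfl⟩
  · have h2 := chi_eq p q r hp hq hr hpq hqr hrp (n - (p:ℤ)*q) x y (z-1) δ
      ⟨hx0, hxp, hy0, hyq, by omega, by linarith, by linear_combination heq⟩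
    refine ⟨fun _ => by rw [h1, h2], fun h => absurd h.2 hz⟩

/-- For `0 ≤ n < pqr` with representation `n = x·qr + y·rp + z·pq + δ·pqr`:
`χ(n) = χ(n - pq)` unless `δ = z = 0`, in which case `χ(n) = 1` and `χ(n - pq) = 0`;
together with the analogues for `qr, x` and for `rp, y`. -/
theorem stmt_12 (p q r : ℕ) (hp : 3 ≤ p) (hq : 3 ≤ q) (hr : 3 ≤ r)
    (hpq : Nat.Coprime p q) (hqr : Nat.Coprime q r) (hrp : Nat.Coprime r p)
    (n : ℤ) (hn0 : 0 ≤ n) (hn : n < ((p * q * r : ℕ) : ℤ))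
    (x y z δ : ℤ) (hrep : rep3 p q r n x y z δ) :
    (¬(δ = 0 ∧ z = 0) → chi p q r n = chi p q r (n - (p : ℤ) * q)) ∧
    ((δ = 0 ∧ z = 0) → chi p q r n = 1 ∧ chi p q r (n - (p : ℤ) * q) = 0) ∧
    (¬(δ = 0 ∧ x = 0) → chi p q r n = chi p q r (n - (q : ℤ) * r)) ∧
    ((δ = 0 ∧ x = 0) → chi p q r n = 1 ∧ chi p q r (n - (q : ℤ) * r) = 0) ∧
    (¬(δ = 0 ∧ y = 0) → chi p q r n = chi p q r (n - (r : ℤ) * p)) ∧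
    ((δ = 0 ∧ y = 0) → chi p q r n = 1 ∧ chi p q r (n - (r : ℤ) * p) = 0) := by
  have hp0 : 0 < p := by omega
  have hq0 : 0 < q := by omega
  have hr0 : 0 < r := by omega
  have hp' : (0:ℤ) < p := by exact_mod_cast hp0
  have hq' : (0:ℤ) < q := by exact_mod_cast hq0
  have hr' : (0:ℤ) < r := by exact_mod_cast hr0
  obtain ⟨hx0, hxp, hy0, hyq, hz0, hzr, heq⟩ := hrep
  have hδ : δ ≤ 0 := by
    by_contra hc
    push_neg at hc
    have h1 : (1:ℤ) ≤ δ := hc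
    have : ((p * q * r : ℕ) : ℤ) = (p:ℤ) * q * r := by push_cast; ring
    nlinarith [mul_nonneg hx0 (by positivity : (0:ℤ) ≤ (q:ℤ)*r),
      mul_nonneg hy0 (by positivity : (0:ℤ) ≤ (r:ℤ)*p),
      mul_nonneg hz0 (by positivity : (0:ℤ) ≤ (p:ℤ)*q),
      mul_le_mul_of_nonneg_right h1 (by positivity : (0:ℤ) ≤ (p:ℤ)*q*r)]
  have Hpq := part_pq p q r hp0 hq0 hr0 hpq hqr hrp n x y z δ
    ⟨hx0, hxp, hy0, hyq, hz0, hzr, heq⟩ hδ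
  have Hqr := part_pq q r p hq0 hr0 hp0 hqr hrp hpq n y z x δ
    ⟨hy0, hyq, hz0, hzr, hx0, hxp, by linear_combination heq⟩ hδ
  have Hrp := part_pq r p q hr0 hp0 hq0 hrp hpq hqr n z x y δ
    ⟨hz0, hzr, hx0, hxp, hy0, hyq, by linear_combination heq⟩ hδ
  rw [← chi_perm p q r n, ← chi_perm p q r (n - (q:ℤ)*r)] at Hqr
  rw [← chi_perm q r p n, ← chi_perm q r p (n - (r:ℤ)*p),
      ← chi_perm p q r n, ← chi_perm p q r (n - (r:ℤ)*p)] at Hrp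
  exact ⟨Hpq.1, Hpq.2, Hqr.1, Hqr.2, Hrp.1, Hrp.2⟩
end

section
/- Let 0 ≤ m < pqr and let R_m be the set of integers appearing as an argument of χ in the identity a_m = Σ_{m−p < n ≤ m} (χ(n) − χ(n−q) − χ(n−r) + χ(n−q−r)), i.e., R_m = { n, n−q, n−r, n−q−r : m−p < n ≤ m }. If there is no n ∈ R_m with δ_n = 0 and z_n = 0, then a_m = a_{m−pq}. The analogous statements hold with pq, z_n replaced by qr, x_n, and with pq, z_n replaced by rp, y_n. -/
open Polynomial
open scoped Classical

/-- `inR p q r m n` says that `n` appears as an argument of `χ` in the sum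
`a_m = Σ_{m-p < n₀ ≤ m} (χ(n₀) - χ(n₀-q) - χ(n₀-r) + χ(n₀-q-r))`. -/
def inR (p q r : ℕ) (m n : ℤ) : Prop :=
  ∃ n₀ : ℤ, m - p < n₀ ∧ n₀ ≤ m ∧
    (n = n₀ ∨ n = n₀ - q ∨ n = n₀ - r ∨ n = n₀ - q - r)

/-! Every integer `n` is uniquely `x·qr + y·rp + z·pq + δ·pqr` with `(x, y, z)` in the box
`[0, p) × [0, q) × [0, r)`, and `n` is a nonnegative combination of `qr, rp, pq` exactly
when `δ ≥ 0`. Hence `(Σ χ(n) zⁿ)·(1 - z^{pqr})` is the generating function of the box, a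
product of three geometric sums, so
`Σ χ(n) zⁿ = (1 - z^{pqr})² / ((1 - z^{qr})(1 - z^{rp})(1 - z^{pq}))`.
Comparing with the defining identity of `Q` gives, for `m < pqr`,
`a_m = Σ_{0 ≤ i < p} (χ(m-i) - χ(m-i-q) - χ(m-i-r) + χ(m-i-q-r))`.
Subtracting `pq` from `n` lowers `z` by one, or, if `z = 0`, resets `z` to `r - 1` and lowers `δ`
by one; so `χ(n) = χ(n - pq)` unless `δ = z = 0`, and under the hypothesis the window sums for
`a_m` and `a_{m-pq}` agree term by term. The other two cases follow by rotating `(p, q, r)`. -/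

theorem exists_nonneg_lt_dvd_sub_mul {a b : ℤ} (hab : IsCoprime a b) (ha : 0 < a) (n : ℤ) :
    ∃ x, 0 ≤ x ∧ x < a ∧ a ∣ n - x * b := by
  obtain ⟨u, v, huv⟩ := hab
  refine ⟨n * v % a, Int.emod_nonneg _ ha.ne', Int.emod_lt_of_pos _ ha,
    n * u + n * v / a * b, ?_⟩
  linear_combination (-n) * huv - b * Int.emod_def (n * v) a

theorem eq_of_dvd_sub_mul {a b x x' : ℤ} (hab : IsCoprime a b) (hx : 0 ≤ x ∧ x < a)
    (hx' : 0 ≤ x' ∧ x' < a) (h : a ∣ (x - x') * b) : x = x' := by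
  have := Int.eq_zero_of_abs_lt_dvd (hab.dvd_of_dvd_mul_right h) (by rw [abs_lt]; omega)
  omega

section Representation

variable {p q r : ℕ} {n x y z δ : ℤ}

theorem isCoprime_mul_of_coprime (hpq : p.Coprime q) (hrp : r.Coprime p) :
    IsCoprime (p : ℤ) (q * r) :=
  (Nat.isCoprime_iff_coprime.2 hpq).mul_right (Nat.isCoprime_iff_coprime.2 hrp.symm)

theorem rep3_rotate : rep3 p q r n x y z δ ↔ rep3 q r p n y z x δ := by
  unfold rep3
  constructor
  · rintro ⟨h₁, h₂, h₃, h₄, h₅, h₆, h₇⟩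
    exact ⟨h₃, h₄, h₅, h₆, h₁, h₂, by rw [h₇]; ring⟩
  · rintro ⟨h₁, h₂, h₃, h₄, h₅, h₆, h₇⟩
    exact ⟨h₅, h₆, h₁, h₂, h₃, h₄, by rw [h₇]; ring⟩

theorem rep3_fst_unique (hpq : p.Coprime q) (hrp : r.Coprime p) {x' y' z' δ' : ℤ}
    (h : rep3 p q r n x y z δ) (h' : rep3 p q r n x' y' z' δ') : x = x' := by
  obtain ⟨hx₀, hxp, -, -, -, -, rfl⟩ := h
  obtain ⟨hx₀', hxp', -, -, -, -, he⟩ := h'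
  refine eq_of_dvd_sub_mul (isCoprime_mul_of_coprime hpq hrp) ⟨hx₀, hxp⟩ ⟨hx₀', hxp'⟩
    ⟨(y' - y) * r + (z' - z) * q + (δ' - δ) * (q * r), ?_⟩
  linear_combination he

theorem rep3_unique (hpq : p.Coprime q) (hqr : q.Coprime r) (hrp : r.Coprime p)
    {x' y' z' δ' : ℤ} (h : rep3 p q r n x y z δ) (h' : rep3 p q r n x' y' z' δ') :
    x = x' ∧ y = y' ∧ z = z' ∧ δ = δ' := by
  have hx := rep3_fst_unique hpq hrp h h'
  have hy := rep3_fst_unique hqr hpq (rep3_rotate.1 h) (rep3_rotate.1 h')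
  have hz := rep3_fst_unique hrp hqr (rep3_rotate.1 (rep3_rotate.1 h))
    (rep3_rotate.1 (rep3_rotate.1 h'))
  subst hx hy hz
  have hpqr : (p : ℤ) * q * r ≠ 0 := by
    obtain ⟨hx₀, hxp, hy₀, hyq, hz₀, hzr, -⟩ := h
    have : (0 : ℤ) < p * q * r := mul_pos (mul_pos (by omega) (by omega)) (by omega)
    exact this.ne'
  exact ⟨rfl, rfl, rfl,
    mul_right_cancel₀ hpqr (by linear_combination h'.2.2.2.2.2.2 - h.2.2.2.2.2.2)⟩

theorem exists_rep3 (hp : 0 < p) (hq : 0 < q) (hr : 0 < r)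
    (hpq : p.Coprime q) (hqr : q.Coprime r) (hrp : r.Coprime p) (n : ℤ) :
    ∃ x y z δ, rep3 p q r n x y z δ := by
  obtain ⟨x, hx₀, hxp, hx⟩ :=
    exists_nonneg_lt_dvd_sub_mul (isCoprime_mul_of_coprime hpq hrp) (by omega) n
  obtain ⟨y, hy₀, hyq, hy⟩ :=
    exists_nonneg_lt_dvd_sub_mul (isCoprime_mul_of_coprime hqr hpq) (by omega) n
  obtain ⟨z, hz₀, hzr, hz⟩ :=
    exists_nonneg_lt_dvd_sub_mul (isCoprime_mul_of_coprime hrp hqr) (by omega) n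
  set M := n - x * (q * r) - y * (r * p) - z * (p * q)
  have hpM : (p : ℤ) ∣ M := by
    rw [show M = n - x * (q * r) - p * (y * r + z * q) by ring]
    exact dvd_sub hx (dvd_mul_right _ _)
  have hqM : (q : ℤ) ∣ M := by
    rw [show M = n - y * (r * p) - q * (x * r + z * p) by ring]
    exact dvd_sub hy (dvd_mul_right _ _)
  have hrM : (r : ℤ) ∣ M := by
    rw [show M = n - z * (p * q) - r * (x * q + y * p) by ring]
    exact dvd_sub hz (dvd_mul_right _ _)
  have hcop : ∀ {a b : ℕ}, a.Coprime b → IsCoprime (a : ℤ) b := Nat.isCoprime_iff_coprime.2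
  obtain ⟨δ, hδ⟩ :=
    ((hcop hrp).symm.mul_left (hcop hqr)).mul_dvd ((hcop hpq).mul_dvd hpM hqM) hrM
  exact ⟨x, y, z, δ, hx₀, hxp, hy₀, hyq, hz₀, hzr, by linear_combination hδ⟩

theorem rep3_sub_pq (h : rep3 p q r n x y z δ) :
    rep3 p q r (n - p * q) x y (if 1 ≤ z then z - 1 else r - 1)
      (if 1 ≤ z then δ else δ - 1) := by
  obtain ⟨hx₀, hxp, hy₀, hyq, hz₀, hzr, hn⟩ := h
  split_ifs with hz
  · exact ⟨hx₀, hxp, hy₀, hyq, by omega, by omega, by linear_combination hn⟩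
  · obtain rfl : z = 0 := by omega
    exact ⟨hx₀, hxp, hy₀, hyq, by omega, by omega, by linear_combination hn⟩

end Representation

section Chi

variable {p q r : ℕ} {n x y z δ : ℤ}

theorem chi_rotate (p q r : ℕ) : chi q r p = chi p q r := by
  funext n
  refine if_congr
    ⟨fun ⟨i, j, k, h⟩ => ⟨k, i, j, ?_⟩, fun ⟨i, j, k, h⟩ => ⟨j, k, i, ?_⟩⟩ rfl rfl <;>
    rw [h] <;> congr 1 <;> ring

theorem chi_of_neg (hn : n < 0) : chi p q r n = 0 :=
  if_neg fun ⟨i, j, k, h⟩ => by omega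

theorem chi_eq_ite_of_rep3 (hpq : p.Coprime q) (hqr : q.Coprime r) (hrp : r.Coprime p)
    (h : rep3 p q r n x y z δ) : chi p q r n = if 0 ≤ δ then 1 else 0 := by
  obtain ⟨hx₀, hxp, hy₀, hyq, hz₀, hzr, hn⟩ := h
  by_cases hδ : 0 ≤ δ
  · rw [if_pos hδ, chi, if_pos]
    refine ⟨x.toNat, y.toNat, (z + δ * r).toNat, ?_⟩
    have : 0 ≤ z + δ * r := by positivity
    push_cast [Int.toNat_of_nonneg hx₀, Int.toNat_of_nonneg hy₀, Int.toNat_of_nonneg this]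
    linear_combination hn
  · rw [if_neg hδ, chi, if_neg]
    rintro ⟨i, j, k, hijk⟩
    push_cast at hijk
    -- reduce `i, j, k` modulo `p, q, r`: the quotients make up a nonnegative `δ`
    have hrep : rep3 p q r n (i % p) (j % q) (k % r) (i / p + j / q + k / r) :=
      ⟨Int.emod_nonneg _ (by omega), Int.emod_lt_of_pos _ (by omega),
        Int.emod_nonneg _ (by omega), Int.emod_lt_of_pos _ (by omega),
        Int.emod_nonneg _ (by omega), Int.emod_lt_of_pos _ (by omega),
        by linear_combination hijk - (q * r : ℤ) * Int.emod_add_mul_ediv (i : ℤ) p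
          - (r * p : ℤ) * Int.emod_add_mul_ediv (j : ℤ) q
          - (p * q : ℤ) * Int.emod_add_mul_ediv (k : ℤ) r⟩
    have := (rep3_unique hpq hqr hrp ⟨hx₀, hxp, hy₀, hyq, hz₀, hzr, hn⟩ hrep).2.2.2
    have : 0 ≤ (i : ℤ) / p + j / q + k / r := by positivity
    omega

theorem chi_eq_chi_sub_pq (hp : 0 < p) (hq : 0 < q) (hr : 0 < r)
    (hpq : p.Coprime q) (hqr : q.Coprime r) (hrp : r.Coprime p)
    (h : ∀ x y z δ, rep3 p q r n x y z δ → ¬(δ = 0 ∧ z = 0)) :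
    chi p q r n = chi p q r (n - p * q) := by
  obtain ⟨x, y, z, δ, hn⟩ := exists_rep3 hp hq hr hpq hqr hrp n
  rw [chi_eq_ite_of_rep3 hpq hqr hrp hn, chi_eq_ite_of_rep3 hpq hqr hrp (rep3_sub_pq hn)]
  have hδz := h x y z δ hn
  have hz₀ : 0 ≤ z := hn.2.2.2.2.1
  split_ifs <;> omega

theorem chi_eq_chi_sub_qr (hp : 0 < p) (hq : 0 < q) (hr : 0 < r)
    (hpq : p.Coprime q) (hqr : q.Coprime r) (hrp : r.Coprime p)
    (h : ∀ x y z δ, rep3 p q r n x y z δ → ¬(δ = 0 ∧ x = 0)) :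
    chi p q r n = chi p q r (n - q * r) := by
  rw [← chi_rotate p q r]
  exact chi_eq_chi_sub_pq hq hr hp hqr hrp hpq fun y z x δ hn => h x y z δ (rep3_rotate.2 hn)

theorem chi_eq_chi_sub_rp (hp : 0 < p) (hq : 0 < q) (hr : 0 < r)
    (hpq : p.Coprime q) (hqr : q.Coprime r) (hrp : r.Coprime p)
    (h : ∀ x y z δ, rep3 p q r n x y z δ → ¬(δ = 0 ∧ y = 0)) :
    chi p q r n = chi p q r (n - r * p) := by
  rw [chi_rotate r p q]
  exact chi_eq_chi_sub_pq hr hp hq hrp hpq hqr fun z x y δ hn =>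
    h x y z δ (rep3_rotate.2 (rep3_rotate.2 hn))

end Chi

theorem PowerSeries.one_sub_X_pow_ne_zero {R : Type*} [Ring R] [Nontrivial R] {k : ℕ}
    (hk : k ≠ 0) : (1 - X ^ k : PowerSeries R) ≠ 0 := fun h => by
  simpa [hk] using congrArg constantCoeff h

noncomputable def chiSeries (p q r : ℕ) : PowerSeries ℤ :=
  PowerSeries.mk fun n => chi p q r n

noncomputable def boxSeries (p q r : ℕ) : PowerSeries ℤ :=
  ∑ t ∈ Finset.range p ×ˢ Finset.range q ×ˢ Finset.range r,
    PowerSeries.X ^ (t.1 * (q * r) + t.2.1 * (r * p) + t.2.2 * (p * q))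

section Series

open Finset

variable {p q r : ℕ}

theorem coeff_chiSeries (n : ℕ) : PowerSeries.coeff n (chiSeries p q r) = chi p q r n :=
  PowerSeries.coeff_mk _ _

theorem coeff_chiSeries_mul_X_pow (n k : ℕ) :
    PowerSeries.coeff n (chiSeries p q r * PowerSeries.X ^ k) = chi p q r (n - k) := by
  rw [PowerSeries.coeff_mul_X_pow', chiSeries]
  split_ifs with h
  · rw [PowerSeries.coeff_mk, Nat.cast_sub h]
  · rw [chi_of_neg (by omega)]

theorem boxSeries_mul :
    boxSeries p q r * ((1 - PowerSeries.X ^ (q * r)) * (1 - PowerSeries.X ^ (r * p)) *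
      (1 - PowerSeries.X ^ (p * q))) = (1 - PowerSeries.X ^ (p * q * r)) ^ 3 := by
  have geom (a b : ℕ) : (∑ i ∈ range a, (PowerSeries.X : PowerSeries ℤ) ^ (i * b)) *
      (1 - PowerSeries.X ^ b) = 1 - PowerSeries.X ^ (a * b) := by
    simp_rw [pow_mul']
    exact geom_sum_mul_neg _ _
  have hbox : boxSeries p q r = (∑ x ∈ range p, PowerSeries.X ^ (x * (q * r))) *
      (∑ y ∈ range q, PowerSeries.X ^ (y * (r * p))) *
      (∑ z ∈ range r, PowerSeries.X ^ (z * (p * q))) := by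
    simp only [boxSeries, sum_product, pow_add, ← mul_sum, ← sum_mul]
  rw [hbox, show ∀ a b c A B C : PowerSeries ℤ,
      a * b * c * (A * B * C) = a * A * (b * B) * (c * C) by intros; ring,
    geom, geom, geom]
  ring

theorem rep3_of_mem_box {x y z : ℕ} (hx : x < p) (hy : y < q) (hz : z < r) :
    rep3 p q r ((x * (q * r) + y * (r * p) + z * (p * q) : ℕ)) x y z 0 :=
  ⟨by positivity, by exact_mod_cast hx, by positivity, by exact_mod_cast hy, by positivity,
    by exact_mod_cast hz, by push_cast; ring⟩

theorem coeff_boxSeries (hpq : p.Coprime q) (hqr : q.Coprime r) (hrp : r.Coprime p)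
    {n : ℕ} {x y z δ : ℤ} (hn : rep3 p q r n x y z δ) :
    PowerSeries.coeff n (boxSeries p q r) = if δ = 0 then 1 else 0 := by
  set e : ℕ × ℕ × ℕ → ℕ := fun t => t.1 * (q * r) + t.2.1 * (r * p) + t.2.2 * (p * q)
  have hinj : Set.InjOn e ↑(range p ×ˢ range q ×ˢ range r) := by
    rintro ⟨a, b, c⟩ ht ⟨a', b', c'⟩ ht' he
    simp only [coe_product, coe_range, Set.mem_prod, Set.mem_Iio] at ht ht'
    have h := rep3_of_mem_box ht.1 ht.2.1 ht.2.2
    simp only [e] at he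
    rw [he] at h
    obtain ⟨ha, hb, hc, -⟩ := rep3_unique hpq hqr hrp h (rep3_of_mem_box ht'.1 ht'.2.1 ht'.2.2)
    simp only [Nat.cast_inj] at ha hb hc
    rw [ha, hb, hc]
  have hmem : n ∈ (range p ×ˢ range q ×ˢ range r).image e ↔ δ = 0 := by
    obtain ⟨hx₀, hxp, hy₀, hyq, hz₀, hzr, he⟩ := hn
    rw [mem_image]
    constructor
    · rintro ⟨⟨a, b, c⟩, ht, rfl⟩
      simp only [mem_product, mem_range] at ht
      exact ((rep3_unique hpq hqr hrp (rep3_of_mem_box ht.1 ht.2.1 ht.2.2)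
        ⟨hx₀, hxp, hy₀, hyq, hz₀, hzr, he⟩).2.2.2).symm
    · rintro rfl
      refine ⟨(x.toNat, y.toNat, z.toNat), ?_, ?_⟩
      · simp only [mem_product, mem_range]
        omega
      · have : ((e (x.toNat, y.toNat, z.toNat) : ℕ) : ℤ) = n := by
          simp only [e]
          push_cast [Int.toNat_of_nonneg hx₀, Int.toNat_of_nonneg hy₀,
            Int.toNat_of_nonneg hz₀]
          linear_combination -he
        exact_mod_cast this
  rw [boxSeries, ← sum_image (g := e) (f := fun s => PowerSeries.X ^ s) hinj, map_sum]
  simp only [PowerSeries.coeff_X_pow]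
  rw [sum_ite_eq, if_congr hmem rfl rfl]

theorem chiSeries_mul_one_sub_X_pow (hp : 0 < p) (hq : 0 < q) (hr : 0 < r)
    (hpq : p.Coprime q) (hqr : q.Coprime r) (hrp : r.Coprime p) :
    chiSeries p q r * (1 - PowerSeries.X ^ (p * q * r)) = boxSeries p q r := by
  ext n
  obtain ⟨x, y, z, δ, hn⟩ := exists_rep3 hp hq hr hpq hqr hrp n
  have hn' : rep3 p q r (n - (p * q * r : ℕ)) x y z (δ - 1) := by
    obtain ⟨hx₀, hxp, hy₀, hyq, hz₀, hzr, he⟩ := hn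
    exact ⟨hx₀, hxp, hy₀, hyq, hz₀, hzr, by push_cast; linear_combination he⟩
  rw [coeff_boxSeries hpq hqr hrp hn, mul_sub, mul_one, map_sub, coeff_chiSeries,
    coeff_chiSeries_mul_X_pow, chi_eq_ite_of_rep3 hpq hqr hrp hn,
    chi_eq_ite_of_rep3 hpq hqr hrp hn']
  split_ifs <;> omega

end Series

section Window

open Finset

variable {p q r : ℕ}

theorem chiSeries_mul (hp : 0 < p) (hq : 0 < q) (hr : 0 < r)
    (hpq : p.Coprime q) (hqr : q.Coprime r) (hrp : r.Coprime p) :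
    chiSeries p q r * ((1 - PowerSeries.X ^ (q * r)) * (1 - PowerSeries.X ^ (r * p)) *
      (1 - PowerSeries.X ^ (p * q))) = (1 - PowerSeries.X ^ (p * q * r)) ^ 2 := by
  refine mul_left_cancel₀ (PowerSeries.one_sub_X_pow_ne_zero (k := p * q * r) (by positivity)) ?_
  rw [mul_left_comm, ← mul_assoc, chiSeries_mul_one_sub_X_pow hp hq hr hpq hqr hrp,
    boxSeries_mul]
  ring

theorem coe_mul_one_sub_X_pow_eq (hp : 0 < p) (hq : 0 < q) (hr : 0 < r)
    (hpq : p.Coprime q) (hqr : q.Coprime r) (hrp : r.Coprime p)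
    {Q : Polynomial ℤ} (hQ : ternaryId p q r Q) :
    (Q : PowerSeries ℤ) * (1 - PowerSeries.X ^ (p * q * r)) =
      chiSeries p q r * ((∑ i ∈ range p, PowerSeries.X ^ i) *
        (1 - PowerSeries.X ^ q) * (1 - PowerSeries.X ^ r)) := by
  have hQ' := congrArg (fun P : Polynomial ℤ => (P : PowerSeries ℤ)) hQ
  simp only [Polynomial.coe_mul, Polynomial.coe_sub, Polynomial.coe_pow, Polynomial.coe_one,
    Polynomial.coe_X] at hQ'
  have hU : ((1 - PowerSeries.X ^ (q * r)) * (1 - PowerSeries.X ^ (r * p)) *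
      (1 - PowerSeries.X ^ (p * q)) * (1 - PowerSeries.X ^ 1) : PowerSeries ℤ) ≠ 0 := by
    simp only [ne_eq, mul_eq_zero, not_or]
    exact ⟨⟨⟨PowerSeries.one_sub_X_pow_ne_zero (by positivity),
      PowerSeries.one_sub_X_pow_ne_zero (by positivity)⟩,
      PowerSeries.one_sub_X_pow_ne_zero (by positivity)⟩,
      PowerSeries.one_sub_X_pow_ne_zero one_ne_zero⟩
  refine mul_right_cancel₀ hU ?_
  rw [pow_one]
  have hH := chiSeries_mul hp hq hr hpq hqr hrp
  have hgeom := geom_sum_mul_neg (PowerSeries.X : PowerSeries ℤ) p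
  linear_combination (1 - PowerSeries.X ^ (p * q * r) : PowerSeries ℤ) * hQ'
    - ((∑ i ∈ range p, PowerSeries.X ^ i) * (1 - PowerSeries.X) * (1 - PowerSeries.X ^ q)
      * (1 - PowerSeries.X ^ r)) * hH
    - ((1 - PowerSeries.X ^ (p * q * r)) ^ 2 * (1 - PowerSeries.X ^ q)
      * (1 - PowerSeries.X ^ r)) * hgeom

theorem aCoeff_eq_sum_chi (hp : 0 < p) (hq : 0 < q) (hr : 0 < r)
    (hpq : p.Coprime q) (hqr : q.Coprime r) (hrp : r.Coprime p)
    {Q : Polynomial ℤ} (hQ : ternaryId p q r Q) {m : ℤ} (hm : m < (p * q * r : ℕ)) :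
    aCoeff Q m = ∑ i ∈ range p, (chi p q r (m - i) - chi p q r (m - i - q)
      - chi p q r (m - i - r) + chi p q r (m - i - q - r)) := by
  rcases lt_or_ge m 0 with hneg | hnonneg
  · rw [aCoeff, if_neg (not_le.2 hneg)]
    refine (sum_eq_zero fun i _ => ?_).symm
    rw [chi_of_neg (by omega), chi_of_neg (by omega), chi_of_neg (by omega),
      chi_of_neg (by omega)]
    ring
  lift m to ℕ using hnonneg
  have h := congrArg (PowerSeries.coeff m) (coe_mul_one_sub_X_pow_eq hp hq hr hpq hqr hrp hQ)
  rw [mul_sub, mul_one, map_sub, PowerSeries.coeff_mul_X_pow', if_neg (by omega),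
    sub_zero, Polynomial.coeff_coe] at h
  rw [aCoeff, if_pos (by positivity), Int.toNat_natCast, h, sum_mul, sum_mul, mul_sum, map_sum]
  refine sum_congr rfl fun i _ => ?_
  rw [show chiSeries p q r * (PowerSeries.X ^ i * (1 - PowerSeries.X ^ q) *
        (1 - PowerSeries.X ^ r)) =
      chiSeries p q r * PowerSeries.X ^ i - chiSeries p q r * PowerSeries.X ^ (i + q) -
        chiSeries p q r * PowerSeries.X ^ (i + r) +
        chiSeries p q r * PowerSeries.X ^ (i + q + r) by ring]
  simp only [map_add, map_sub, coeff_chiSeries_mul_X_pow, Nat.cast_add, sub_add_eq_sub_sub]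

theorem aCoeff_eq_aCoeff_sub (hp : 0 < p) (hq : 0 < q) (hr : 0 < r)
    (hpq : p.Coprime q) (hqr : q.Coprime r) (hrp : r.Coprime p)
    {Q : Polynomial ℤ} (hQ : ternaryId p q r Q) {m : ℤ} (hm : m < (p * q * r : ℕ))
    {s : ℤ} (hs : 0 ≤ s) (h : ∀ n, inR p q r m n → chi p q r n = chi p q r (n - s)) :
    aCoeff Q m = aCoeff Q (m - s) := by
  rw [aCoeff_eq_sum_chi hp hq hr hpq hqr hrp hQ hm,
    aCoeff_eq_sum_chi hp hq hr hpq hqr hrp hQ (by omega)]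
  refine sum_congr rfl fun i hi => ?_
  have hi : (i : ℤ) < p := by exact_mod_cast mem_range.1 hi
  have hR : ∀ n, (n = m - i ∨ n = m - i - q ∨ n = m - i - r ∨ n = m - i - q - r) →
      inR p q r m n := fun n hn => ⟨m - i, by omega, by omega, hn⟩
  rw [h _ (hR _ (Or.inl rfl)), h _ (hR _ (Or.inr (Or.inl rfl))),
    h _ (hR _ (Or.inr (Or.inr (Or.inl rfl)))), h _ (hR _ (Or.inr (Or.inr (Or.inr rfl))))]
  simp only [sub_right_comm _ s]

end Window

theorem stmt_13_general (p q r : ℕ) (hp : 3 ≤ p) (hq : 3 ≤ q) (hr : 3 ≤ r)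
    (hpq : Nat.Coprime p q) (hqr : Nat.Coprime q r) (hrp : Nat.Coprime r p)
    (Q : Polynomial ℤ) (hQ : ternaryId p q r Q)
    (m : ℤ) (hm : m < ((p * q * r : ℕ) : ℤ)) :
    ((∀ n x y z δ : ℤ, inR p q r m n → rep3 p q r n x y z δ → ¬(δ = 0 ∧ z = 0)) →
        aCoeff Q m = aCoeff Q (m - (p : ℤ) * q)) ∧
    ((∀ n x y z δ : ℤ, inR p q r m n → rep3 p q r n x y z δ → ¬(δ = 0 ∧ x = 0)) →
        aCoeff Q m = aCoeff Q (m - (q : ℤ) * r)) ∧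
    ((∀ n x y z δ : ℤ, inR p q r m n → rep3 p q r n x y z δ → ¬(δ = 0 ∧ y = 0)) →
        aCoeff Q m = aCoeff Q (m - (r : ℤ) * p)) := by
  have hp₀ : 0 < p := by omega
  have hq₀ : 0 < q := by omega
  have hr₀ : 0 < r := by omega
  refine ⟨fun h => ?_, fun h => ?_, fun h => ?_⟩
  · exact aCoeff_eq_aCoeff_sub hp₀ hq₀ hr₀ hpq hqr hrp hQ hm (by positivity) fun n hn =>
      chi_eq_chi_sub_pq hp₀ hq₀ hr₀ hpq hqr hrp (h n · · · · hn)
  · exact aCoeff_eq_aCoeff_sub hp₀ hq₀ hr₀ hpq hqr hrp hQ hm (by positivity) fun n hn =>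
      chi_eq_chi_sub_qr hp₀ hq₀ hr₀ hpq hqr hrp (h n · · · · hn)
  · exact aCoeff_eq_aCoeff_sub hp₀ hq₀ hr₀ hpq hqr hrp hQ hm (by positivity) fun n hn =>
      chi_eq_chi_sub_rp hp₀ hq₀ hr₀ hpq hqr hrp (h n · · · · hn)

/-- For `0 ≤ m < pqr`: if no `n ∈ R_m` has `δ_n = z_n = 0`, then `a_m = a_{m-pq}`;
together with the analogues for `qr, x_n` and for `rp, y_n`. -/
theorem stmt_13 (p q r : ℕ) (hp : 3 ≤ p) (hq : 3 ≤ q) (hr : 3 ≤ r)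
    (hpq : Nat.Coprime p q) (hqr : Nat.Coprime q r) (hrp : Nat.Coprime r p)
    (Q : Polynomial ℤ) (hQ : ternaryId p q r Q)
    (m : ℤ) (hm0 : 0 ≤ m) (hm : m < ((p * q * r : ℕ) : ℤ)) :
    ((∀ n x y z δ : ℤ, inR p q r m n → rep3 p q r n x y z δ → ¬(δ = 0 ∧ z = 0)) →
        aCoeff Q m = aCoeff Q (m - (p : ℤ) * q)) ∧
    ((∀ n x y z δ : ℤ, inR p q r m n → rep3 p q r n x y z δ → ¬(δ = 0 ∧ x = 0)) →
        aCoeff Q m = aCoeff Q (m - (q : ℤ) * r)) ∧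
    ((∀ n x y z δ : ℤ, inR p q r m n → rep3 p q r n x y z δ → ¬(δ = 0 ∧ y = 0)) →
        aCoeff Q m = aCoeff Q (m - (r : ℤ) * p)) :=
  stmt_13_general p q r hp hq hr hpq hqr hrp Q hQ m hm
end

section
/- If r ≥ p + q, then for every integer m the coefficients of Q_{p,q,r} satisfy |a_m − a_{m−pq}| ≤ 1. -/
open Polynomial
open scoped Classical

/-!
Let `P = Q·(z^{pq} - 1)`, whose coefficient of `z^m` is `a_{m-pq} - a_m`. Cancelling the
denominators of the defining identity gives `P·(z^{pqr} - 1) = G(z^r)·H` with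
`G = (z - 1)·∑_{i<q, j<p} z^{ip+jq}` and `H = (z^p - 1)(1 + z + ⋯ + z^{q-1})`.
Both `G` and `H` are `(z^k - 1)` times a polynomial with coefficients in `{0, 1}` (for `G`
because the exponents `ip + jq` with `i < q` are distinct when `p, q` are coprime), so their
coefficients lie in `{-1, 0, 1}`. Since `deg H < p + q ≤ r`, every coefficient
of `G(z^r)·H` is a single product of a coefficient of `G` and one of `H`, and since
`deg P < pqr` the coefficients of `P` are those of `P·(z^{pqr} - 1)` up to sign.
-/

open Finset

lemma Nat.eq_and_eq_of_mul_add_mul_eq {p q i j i' j' : ℕ} (hpq : p.Coprime q)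
    (hi : i < q) (hi' : i' < q) (h : i * p + j * q = i' * p + j' * q) : i = i' ∧ j = j' := by
  have hii : i = i' := by
    refine Nat.ModEq.eq_of_lt_of_lt (Nat.ModEq.cancel_right_of_coprime (c := p) hpq.symm ?_) hi hi'
    simpa [Nat.ModEq, Nat.add_mul_mod_self_right] using congrArg (· % q) h
  subst hii
  exact ⟨rfl, Nat.eq_of_mul_eq_mul_right (by omega) (Nat.add_left_cancel h)⟩

namespace Polynomial

section XPowSubOne

variable {R : Type*} [Ring R] [Nontrivial R]

lemma X_pow_sub_one_ne_zero {n : ℕ} (hn : 0 < n) : (X ^ n - 1 : R[X]) ≠ 0 := by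
  simpa using X_pow_sub_C_ne_zero hn (1 : R)

lemma natDegree_X_pow_sub_one (n : ℕ) : (X ^ n - 1 : R[X]).natDegree = n := by
  simpa using natDegree_X_pow_sub_C (n := n) (r := (1 : R))

end XPowSubOne

lemma coeff_sum_X_pow_nonneg {ι : Type*} (s : Finset ι) (f : ι → ℕ) (n : ℕ) :
    0 ≤ (∑ i ∈ s, (X : ℤ[X]) ^ f i).coeff n := by
  rw [finsetSum_coeff]
  exact sum_nonneg fun i _ => by rw [coeff_X_pow]; split_ifs <;> norm_num

lemma coeff_sum_X_pow_le_one {ι : Type*} {s : Finset ι} {f : ι → ℕ} (hf : Set.InjOn f s)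
    (n : ℕ) : (∑ i ∈ s, (X : ℤ[X]) ^ f i).coeff n ≤ 1 := by
  simp only [finsetSum_coeff, coeff_X_pow, sum_boole]
  refine mod_cast card_le_one.2 fun a ha b hb => ?_
  rw [mem_filter] at ha hb
  exact hf ha.1 hb.1 (ha.2.symm.trans hb.2)

lemma abs_coeff_X_pow_sub_one_mul_le_one {F : ℤ[X]} (hF₀ : ∀ n, 0 ≤ F.coeff n)
    (hF₁ : ∀ n, F.coeff n ≤ 1) (k n : ℕ) : |((X ^ k - 1) * F).coeff n| ≤ 1 := by
  rw [sub_mul, one_mul, coeff_sub, coeff_X_pow_mul', abs_le]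
  split_ifs <;> constructor <;> linarith [hF₀ n, hF₁ n, hF₀ (n - k), hF₁ (n - k)]

lemma coeff_expand_mul_of_natDegree_lt {R : Type*} [CommSemiring R] {r : ℕ} (hr : 0 < r)
    (G : R[X]) {H : R[X]} (hH : H.natDegree < r) (n : ℕ) :
    (expand R r G * H).coeff n = G.coeff (n / r) * H.coeff (n % r) := by
  rw [coeff_mul, sum_eq_single (r * (n / r), n % r)]
  · rw [coeff_expand hr, if_pos (dvd_mul_right r _), Nat.mul_div_cancel_left _ hr]
  · rintro ⟨u, v⟩ huv hne
    rw [HasAntidiagonal.mem_antidiagonal] at huv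
    rw [coeff_expand hr]
    split_ifs with hu
    · obtain ⟨k, rfl⟩ := hu
      have hv : r ≤ v := by
        by_contra! hv
        obtain ⟨rfl, rfl⟩ := (Nat.div_mod_unique hr).2 ⟨(by omega : v + r * k = n), hv⟩
        exact hne rfl
      rw [coeff_eq_zero_of_natDegree_lt (hH.trans_le hv), mul_zero]
    · rw [zero_mul]
  · exact fun h => absurd (HasAntidiagonal.mem_antidiagonal.2 (Nat.div_add_mod n r)) h

lemma abs_coeff_le_one_of_abs_coeff_mul_X_pow_sub_one_le_one {P : ℤ[X]} {N : ℕ}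
    (hP : P.natDegree < N) (h : ∀ n, |(P * (X ^ N - 1)).coeff n| ≤ 1) (n : ℕ) :
    |P.coeff n| ≤ 1 := by
  by_cases hn : n < N
  · simpa [mul_sub, coeff_mul_X_pow', hn.not_ge] using h n
  · simp [coeff_eq_zero_of_natDegree_lt (hP.trans_le (not_lt.1 hn))]

end Polynomial

noncomputable def semigroupSum (p q : ℕ) : ℤ[X] :=
  ∑ x ∈ range q ×ˢ range p, X ^ (x.1 * p + x.2 * q)

lemma semigroupSum_mul (p q : ℕ) :
    semigroupSum p q * ((X ^ p - 1) * (X ^ q - 1)) = (X ^ (p * q) - 1) ^ 2 := by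
  have hsplit : semigroupSum p q =
      (∑ i ∈ range q, ((X : ℤ[X]) ^ p) ^ i) * ∑ j ∈ range p, ((X : ℤ[X]) ^ q) ^ j := by
    rw [semigroupSum, sum_mul_sum, sum_product]
    simp only [← pow_mul, ← pow_add, mul_comm]
  calc semigroupSum p q * ((X ^ p - 1) * (X ^ q - 1))
      = ((∑ i ∈ range q, ((X : ℤ[X]) ^ p) ^ i) * (X ^ p - 1)) *
          ((∑ j ∈ range p, ((X : ℤ[X]) ^ q) ^ j) * (X ^ q - 1)) := by rw [hsplit]; ring
    _ = (X ^ (p * q) - 1) ^ 2 := by rw [geom_sum_mul, geom_sum_mul]; ring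

lemma abs_coeff_X_sub_one_mul_semigroupSum_le_one {p q : ℕ} (hpq : p.Coprime q) (n : ℕ) :
    |((X - 1) * semigroupSum p q).coeff n| ≤ 1 := by
  have hinj : Set.InjOn (fun x : ℕ × ℕ => x.1 * p + x.2 * q) (range q ×ˢ range p : Finset _) := by
    rintro ⟨i, j⟩ hij ⟨i', j'⟩ hij' h
    simp only [coe_product, Set.mem_prod, mem_coe, mem_range] at hij hij'
    obtain ⟨rfl, rfl⟩ := Nat.eq_and_eq_of_mul_add_mul_eq hpq hij.1 hij'.1 h
    rfl
  simpa [semigroupSum] using abs_coeff_X_pow_sub_one_mul_le_one (coeff_sum_X_pow_nonneg _ _)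
    (coeff_sum_X_pow_le_one hinj) 1 n

lemma abs_coeff_X_pow_sub_one_mul_geom_sum_le_one (p q n : ℕ) :
    |((X ^ p - 1) * ∑ i ∈ range q, (X : ℤ[X]) ^ i).coeff n| ≤ 1 :=
  abs_coeff_X_pow_sub_one_mul_le_one (coeff_sum_X_pow_nonneg _ id)
    (coeff_sum_X_pow_le_one (Set.injOn_id _)) p n

lemma natDegree_X_pow_sub_one_mul_geom_sum_lt (p : ℕ) {q : ℕ} (hq : 0 < q) :
    ((X ^ p - 1) * ∑ i ∈ range q, (X : ℤ[X]) ^ i).natDegree < p + q := by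
  calc _ ≤ (X ^ p - 1 : ℤ[X]).natDegree + (∑ i ∈ range q, (X : ℤ[X]) ^ i).natDegree :=
        natDegree_mul_le
    _ ≤ p + (q - 1) := by
        rw [natDegree_X_pow_sub_one]
        gcongr
        exact natDegree_sum_le_of_forall_le _ _ fun i hi => by
          simpa using Nat.le_sub_one_of_lt (mem_range.1 hi)
    _ < p + q := by omega

lemma natDegree_add_of_ternaryId {p q r : ℕ} (hp : 0 < p) (hq : 0 < q) (hr : 0 < r)
    {Q : ℤ[X]} (hQ : ternaryId p q r Q) :
    Q.natDegree + (q * r + r * p + p * q + 1) = p * q * r + r + q + p := by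
  have hX : (X - 1 : ℤ[X]) ≠ 0 := by simpa using X_pow_sub_one_ne_zero (R := ℤ) one_pos
  have hXdeg : (X - 1 : ℤ[X]).natDegree = 1 := by simpa using natDegree_X_pow_sub_one (R := ℤ) 1
  have hQ0 : Q ≠ 0 := by
    rintro rfl
    simp [ternaryId, X_pow_sub_one_ne_zero, hp, hq, hr] at hQ
  have hdeg := congrArg natDegree hQ
  simp [natDegree_mul, X_pow_sub_one_ne_zero, natDegree_X_pow_sub_one, hQ0, hp, hq, hr, hX,
    hXdeg] at hdeg
  omega

lemma mul_X_pow_sub_one_mul_eq_expand_mul_of_ternaryId {p q r : ℕ} (hp : 0 < p) (hq : 0 < q)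
    (hr : 0 < r) {Q : ℤ[X]} (hQ : ternaryId p q r Q) :
    Q * (X ^ (p * q) - 1) * (X ^ (p * q * r) - 1) =
      expand ℤ r ((X - 1) * semigroupSum p q) * ((X ^ p - 1) * ∑ i ∈ range q, X ^ i) := by
  have hF := congrArg (expand ℤ r) (semigroupSum_mul p q)
  simp only [map_mul, map_sub, map_pow, expand_X, map_one] at hF
  have hM : (X ^ (q * r) - 1) * (X ^ (r * p) - 1) * (X - 1 : ℤ[X]) ≠ 0 :=
    mul_ne_zero (mul_ne_zero (X_pow_sub_one_ne_zero (by positivity))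
      (X_pow_sub_one_ne_zero (by positivity))) (by simpa using X_pow_sub_one_ne_zero one_pos)
  apply mul_right_cancel₀ hM
  have hgeom : (∑ i ∈ range q, (X : ℤ[X]) ^ i) * (X - 1) = X ^ q - 1 := geom_sum_mul X q
  unfold ternaryId at hQ
  rw [map_mul, map_sub, expand_X, map_one]
  linear_combination (X ^ (p * q * r) - 1) * hQ
    - (X ^ r - 1) * (X ^ p - 1) * (∑ i ∈ range q, (X : ℤ[X]) ^ i) * (X - 1) * hF
    - (X ^ r - 1) * (X ^ p - 1) * (X ^ (p * q * r) - 1) ^ 2 * hgeom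

lemma abs_aCoeff_sub_aCoeff_sub_le_one {Q : ℤ[X]} {k : ℕ}
    (h : ∀ n, |(Q * (X ^ k - 1)).coeff n| ≤ 1) (m : ℤ) :
    |aCoeff Q m - aCoeff Q (m - k)| ≤ 1 := by
  rcases lt_or_ge m 0 with hm | hm
  · simp [aCoeff, hm.not_ge, show ¬ (k : ℤ) ≤ m by omega]
  lift m to ℕ using hm
  have hcoeff : aCoeff Q (m - k) = if k ≤ m then Q.coeff (m - k) else 0 := by
    unfold aCoeff
    split_ifs <;> first | omega | rfl | congr 1; omega
  have := h m
  rw [mul_sub, mul_one, coeff_sub, coeff_mul_X_pow'] at this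
  rw [hcoeff, ← abs_neg]
  simpa [aCoeff] using this

theorem stmt_15_general (p q r : ℕ) (hp : 3 ≤ p) (hq : 3 ≤ q)
    (hpq : Nat.Coprime p q)
    (hbig : p + q ≤ r)
    (Q : Polynomial ℤ) (hQ : ternaryId p q r Q) :
    ∀ m : ℤ, |aCoeff Q m - aCoeff Q (m - (p : ℤ) * q)| ≤ 1 := by
  have hp₀ : 0 < p := by omega
  have hq₀ : 0 < q := by omega
  have hr₀ : 0 < r := by omega
  have hprod : ∀ n, |(Q * (X ^ (p * q) - 1) * (X ^ (p * q * r) - 1)).coeff n| ≤ 1 := by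
    intro n
    rw [mul_X_pow_sub_one_mul_eq_expand_mul_of_ternaryId hp₀ hq₀ hr₀ hQ,
      coeff_expand_mul_of_natDegree_lt hr₀ _
        ((natDegree_X_pow_sub_one_mul_geom_sum_lt p hq₀).trans_le hbig), abs_mul]
    exact mul_le_one₀ (abs_coeff_X_sub_one_mul_semigroupSum_le_one hpq _) (abs_nonneg _)
      (abs_coeff_X_pow_sub_one_mul_geom_sum_le_one p q _)
  have hdeg : (Q * (X ^ (p * q) - 1)).natDegree < p * q * r := by
    have := natDegree_add_of_ternaryId hp₀ hq₀ hr₀ hQ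
    calc _ ≤ Q.natDegree + p * q := natDegree_mul_le.trans_eq (by rw [natDegree_X_pow_sub_one])
      _ < p * q * r := by nlinarith
  intro m
  exact_mod_cast abs_aCoeff_sub_aCoeff_sub_le_one
    (abs_coeff_le_one_of_abs_coeff_mul_X_pow_sub_one_le_one hdeg hprod) m

/-- If `r ≥ p + q` then `|a_m - a_{m-pq}| ≤ 1` for every `m`. -/
theorem stmt_15 (p q r : ℕ) (hp : 3 ≤ p) (hq : 3 ≤ q) (hr : 3 ≤ r)
    (hpq : Nat.Coprime p q) (hqr : Nat.Coprime q r) (hrp : Nat.Coprime r p)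
    (hbig : p + q ≤ r)
    (Q : Polynomial ℤ) (hQ : ternaryId p q r Q) :
    ∀ m : ℤ, |aCoeff Q m - aCoeff Q (m - (p : ℤ) * q)| ≤ 1 :=
  stmt_15_general p q r hp hq hpq hbig Q hQ
end

section
/- Let r and s both be ≥ 3 and coprime to pq. If r ≡ s (mod pq) and n₁ ≡ n₂ (mod pq), then f_r(n₁) = f_s(n₂). -/
open Polynomial
open scoped Classical

lemma aux_cancel (p q r s : ℕ) (hp : 0 < p)
    (hqp : Nat.Coprime q p) (hrp : Nat.Coprime r p) (hsp : Nat.Coprime s p)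
    (hrs : r ≡ s [MOD p])
    (n₁ n₂ x₁ x₂ : ℤ)
    (hn : n₁ ≡ n₂ [ZMOD (p : ℤ)])
    (hx₁ : 0 ≤ x₁) (hx₁' : x₁ < p) (hx₂ : 0 ≤ x₂) (hx₂' : x₂ < p)
    (e₁ : n₁ ≡ x₁ * ((q : ℤ) * r) [ZMOD (p : ℤ)])
    (e₂ : n₂ ≡ x₂ * ((q : ℤ) * s) [ZMOD (p : ℤ)]) : x₁ = x₂ := by
  have key : (x₁ : ZMod p) = x₂ := by
    have E1 : ((n₁ : ℤ) : ZMod p) = ((x₁ * ((q : ℤ) * r) : ℤ) : ZMod p) :=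
      (ZMod.intCast_eq_intCast_iff' _ _ _).mpr (by exact_mod_cast e₁)
    have E2 : ((n₂ : ℤ) : ZMod p) = ((x₂ * ((q : ℤ) * s) : ℤ) : ZMod p) :=
      (ZMod.intCast_eq_intCast_iff' _ _ _).mpr (by exact_mod_cast e₂)
    have EN : ((n₁ : ℤ) : ZMod p) = ((n₂ : ℤ) : ZMod p) :=
      (ZMod.intCast_eq_intCast_iff' _ _ _).mpr (by exact_mod_cast hn)
    have ERS : ((r : ℕ) : ZMod p) = ((s : ℕ) : ZMod p) :=
      (ZMod.natCast_eq_natCast_iff _ _ _).mpr hrs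
    push_cast at E1 E2
    rw [E1, E2, ← ERS] at EN
    have hqU : IsUnit ((q : ℕ) : ZMod p) := (ZMod.isUnit_iff_coprime q p).mpr hqp
    have hrU : IsUnit ((r : ℕ) : ZMod p) := (ZMod.isUnit_iff_coprime r p).mpr hrp
    rw [mul_comm (x₁ : ZMod p), mul_comm (x₂ : ZMod p)] at EN
    exact (hqU.mul hrU).mul_left_cancel EN
  have hmod : x₁ ≡ x₂ [ZMOD (p : ℤ)] := (ZMod.intCast_eq_intCast_iff' _ _ _).mp (by exact_mod_cast key)
  have h1 : x₁ % (p : ℤ) = x₂ % (p : ℤ) := hmod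
  rwa [Int.emod_eq_of_lt hx₁ hx₁', Int.emod_eq_of_lt hx₂ hx₂'] at h1

/-- If `r ≡ s (mod pq)` and `n₁ ≡ n₂ (mod pq)` then `f_r(n₁) = f_s(n₂)`,
where `f_r(n) = x_n·q + y_n·p` is computed from the representation of `n`
relative to `p, q, r`. -/
theorem stmt_17 (p q : ℕ) (hp : 3 ≤ p) (hq : 3 ≤ q) (hpq : Nat.Coprime p q)
    (r s : ℕ) (hr3 : 3 ≤ r) (hs3 : 3 ≤ s)
    (hrc : Nat.Coprime r (p * q)) (hsc : Nat.Coprime s (p * q))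
    (hmod : r ≡ s [MOD p * q])
    (n₁ n₂ : ℤ) (hn : n₁ ≡ n₂ [ZMOD ((p : ℤ) * q)])
    (x₁ y₁ z₁ δ₁ : ℤ) (h₁ : rep3 p q r n₁ x₁ y₁ z₁ δ₁)
    (x₂ y₂ z₂ δ₂ : ℤ) (h₂ : rep3 p q s n₂ x₂ y₂ z₂ δ₂) :
    x₁ * q + y₁ * p = x₂ * q + y₂ * p := by
  obtain ⟨hx₁, hx₁', hy₁, hy₁', hz₁, hz₁', e₁⟩ := h₁
  obtain ⟨hx₂, hx₂', hy₂, hy₂', hz₂, hz₂', e₂⟩ := h₂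
  have hnp : n₁ ≡ n₂ [ZMOD (p : ℤ)] :=
    hn.of_dvd (by exact_mod_cast dvd_mul_right (p:ℤ) q)
  have hnq : n₁ ≡ n₂ [ZMOD (q : ℤ)] :=
    hn.of_dvd (by exact_mod_cast dvd_mul_left (q:ℤ) p)
  have hrsp : r ≡ s [MOD p] := hmod.of_dvd (dvd_mul_right p q)
  have hrsq : r ≡ s [MOD q] := hmod.of_dvd (dvd_mul_left q p)
  have hx : x₁ = x₂ := by
    refine aux_cancel p q r s (by omega) hpq.symm ((Nat.coprime_mul_iff_right.mp hrc).1)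
      ((Nat.coprime_mul_iff_right.mp hsc).1) hrsp n₁ n₂ x₁ x₂ hnp hx₁ hx₁' hx₂ hx₂' ?_ ?_
    · exact Int.modEq_iff_dvd.mpr ⟨-(y₁ * r + z₁ * q + δ₁ * (q * r)), by rw [e₁]; ring⟩
    · exact Int.modEq_iff_dvd.mpr ⟨-(y₂ * s + z₂ * q + δ₂ * (q * s)), by rw [e₂]; ring⟩
  have hy : y₁ = y₂ := by
    refine aux_cancel q p r s (by omega) hpq ((Nat.coprime_mul_iff_right.mp hrc).2)
      ((Nat.coprime_mul_iff_right.mp hsc).2) hrsq n₁ n₂ y₁ y₂ hnq hy₁ hy₁' hy₂ hy₂' ?_ ?_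
    · exact Int.modEq_iff_dvd.mpr ⟨-(x₁ * r + z₁ * p + δ₁ * (p * r)), by rw [e₁]; ring⟩
    · exact Int.modEq_iff_dvd.mpr ⟨-(x₂ * s + z₂ * p + δ₂ * (p * s)), by rw [e₂]; ring⟩
  rw [hx, hy]
end
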